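/- arXiv:1811.02909 — 3 statements merged into one kernel-verified Lean document; each statement's English description precedes it below -/
import Mathlib

section
/- Let H be a weak Hopf algebra over a field k and let B be a unital associative k-algebra endowed with a counital coassociative right H-comodule structure δ_B : B → B⊗H (written δ_B(b) = Σ b₍₀₎⊗b₍₁₎) such that δ_B(xy) = δ_B(x)δ_B(y) for all x,y ∈ B, where B⊗H carries the componentwise product. Then Σ (1_B)₍₀₎ ⊗ Π^L((1_B)₍₁₎) = δ_B(1_B); in particular B is a right H-comodule algebra. -/
/-!
Common framework: weak bialgebras, weak Hopf algebras, weak measures and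
unitary weak crossed products, formalized via linear maps over a field `k`.
Sweedler sums are expressed by composites of canonical linear maps.
-/

open TensorProduct

set_option autoImplicit false
set_option maxHeartbeats 1000000

noncomputable section

namespace WeakCrossed

variable (k : Type*) [Field k]
variable (H : Type*) [Ring H] [Algebra k H] [Coalgebra k H]
variable (A : Type*) [Ring A] [Algebra k A]

/-- The comultiplication of `H`. -/
abbrev comulH : H →ₗ[k] H ⊗[k] H := Coalgebra.comul

/-- The counit of `H`. -/
abbrev counitH : H →ₗ[k] k := Coalgebra.counit

/-- The rearrangement `(M ⊗ N) ⊗ P ≃ (M ⊗ P) ⊗ N`. -/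
def rightComm (M N P : Type*) [AddCommGroup M] [AddCommGroup N] [AddCommGroup P]
    [Module k M] [Module k N] [Module k P] :
    (M ⊗[k] N) ⊗[k] P ≃ₗ[k] (M ⊗[k] P) ⊗[k] N :=
  TensorProduct.assoc k M N P ≪≫ₗ
    TensorProduct.congr (LinearEquiv.refl k M) (TensorProduct.comm k N P) ≪≫ₗ
      (TensorProduct.assoc k M P N).symm

/-- The comultiplication of the tensor product coalgebra `H ⊗ H`:
`h ⊗ g ↦ Σ (h₍₁₎ ⊗ g₍₁₎) ⊗ (h₍₂₎ ⊗ g₍₂₎)`. -/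
def comul2 : H ⊗[k] H →ₗ[k] (H ⊗[k] H) ⊗[k] (H ⊗[k] H) :=
  (TensorProduct.tensorTensorTensorComm k H H H H).toLinearMap ∘ₗ
    TensorProduct.map (comulH k H) (comulH k H)

/-- Iterated comultiplication `h ↦ Σ (h₍₁₎ ⊗ h₍₂₎) ⊗ h₍₃₎`. -/
def comul3H : H →ₗ[k] (H ⊗[k] H) ⊗[k] H :=
  LinearMap.rTensor H (comulH k H) ∘ₗ comulH k H

/-- The comultiplication of the tensor product coalgebra `(H ⊗ H) ⊗ H`. -/
def comul3 : (H ⊗[k] H) ⊗[k] H →ₗ[k]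
    ((H ⊗[k] H) ⊗[k] H) ⊗[k] ((H ⊗[k] H) ⊗[k] H) :=
  (TensorProduct.tensorTensorTensorComm k (H ⊗[k] H) (H ⊗[k] H) H H).toLinearMap ∘ₗ
    TensorProduct.map (comul2 k H) (comulH k H)

/-- The target map `Π^L(h) = Σ ε(1₍₁₎ h) 1₍₂₎`. -/
def piL : H →ₗ[k] H :=
  (TensorProduct.lid k H).toLinearMap ∘ₗ
    TensorProduct.map (counitH k H) (LinearMap.id : H →ₗ[k] H) ∘ₗ
      LinearMap.mulLeft k (comulH k H 1) ∘ₗ (TensorProduct.mk k H H).flip 1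

/-- The source map `Π^R(h) = Σ 1₍₁₎ ε(h 1₍₂₎)`. -/
def piR : H →ₗ[k] H :=
  (TensorProduct.rid k H).toLinearMap ∘ₗ
    TensorProduct.map (LinearMap.id : H →ₗ[k] H) (counitH k H) ∘ₗ
      LinearMap.mulRight k (comulH k H 1) ∘ₗ TensorProduct.mk k H H 1

/-- The axioms of a weak bialgebra:  `Δ` is multiplicative, the weak counit
axiom `ε(xyz) = Σ ε(x y₍₁₎) ε(y₍₂₎ z) = Σ ε(x y₍₂₎) ε(y₍₁₎ z)` holds, and the
weak unit axiom
`(Δ⊗id)(Δ(1)) = (Δ(1)⊗1)(1⊗Δ(1)) = (1⊗Δ(1))(Δ(1)⊗1)` holds. -/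
structure IsWeakBialgebra : Prop where
  comul_mul : ∀ x y : H, comulH k H (x * y) = comulH k H x * comulH k H y
  counit_mul : ∀ x y z : H,
    counitH k H (x * y * z) =
      (LinearMap.mul' k k ∘ₗ TensorProduct.map
        (counitH k H ∘ₗ LinearMap.mulLeft k x)
        (counitH k H ∘ₗ LinearMap.mulRight k z)) (comulH k H y)
  counit_mul_op : ∀ x y z : H,
    counitH k H (x * y * z) =
      (LinearMap.mul' k k ∘ₗ TensorProduct.map
        (counitH k H ∘ₗ LinearMap.mulLeft k x)
        (counitH k H ∘ₗ LinearMap.mulRight k z))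
        (TensorProduct.comm k H H (comulH k H y))
  comul_one_left :
    comul3H k H 1 =
      (comulH k H 1 ⊗ₜ[k] (1 : H)) *
        (TensorProduct.assoc k H H H).symm ((1 : H) ⊗ₜ[k] comulH k H 1)
  comul_one_right :
    comul3H k H 1 =
      ((TensorProduct.assoc k H H H).symm ((1 : H) ⊗ₜ[k] comulH k H 1)) *
        (comulH k H 1 ⊗ₜ[k] (1 : H))

/-- The axioms of an antipode of a weak Hopf algebra:
`Σ h₍₁₎ S(h₍₂₎) = Π^L(h)`, `Σ S(h₍₁₎) h₍₂₎ = Π^R(h)` and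
`Σ S(h₍₁₎) h₍₂₎ S(h₍₃₎) = S(h)`. -/
structure IsWeakHopf (S : H →ₗ[k] H) : Prop where
  antipode_left : ∀ h : H,
    LinearMap.mul' k H (LinearMap.lTensor H S (comulH k H h)) = piL k H h
  antipode_right : ∀ h : H,
    LinearMap.mul' k H (LinearMap.rTensor H S (comulH k H h)) = piR k H h
  antipode_mid : ∀ h : H,
    LinearMap.mul' k H
      (TensorProduct.map (LinearMap.mul' k H ∘ₗ LinearMap.rTensor H S) S
        (comul3H k H h)) = S h

variable {k H A}

/-- `h ↦ ρ(h ⊗ a)`. -/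
def rhoAt (ρ : H ⊗[k] A →ₗ[k] A) (a : A) : H →ₗ[k] A :=
  ρ ∘ₗ (TensorProduct.mk k H A).flip a

/-- `ρ` is a weak measure of `H` on `A`:
`ρ(h ⊗ ab) = Σ ρ(h₍₁₎ ⊗ a) ρ(h₍₂₎ ⊗ b)`. -/
def IsWeakMeasure (ρ : H ⊗[k] A →ₗ[k] A) : Prop :=
  ∀ (h : H) (a b : A),
    ρ (h ⊗ₜ[k] (a * b)) =
      (LinearMap.mul' k A ∘ₗ TensorProduct.map ρ ρ)
        (TensorProduct.tensorTensorTensorComm k H H A A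
          (comulH k H h ⊗ₜ[k] (a ⊗ₜ[k] b)))

/-- Convolution product on `Hom(H, B)`: `(α * β)(h) = Σ α(h₍₁₎) β(h₍₂₎)`. -/
def conv1 {B : Type*} [Ring B] [Algebra k B] (α β : H →ₗ[k] B) : H →ₗ[k] B :=
  LinearMap.mul' k B ∘ₗ TensorProduct.map α β ∘ₗ comulH k H

/-- Convolution product on `Hom(H ⊗ H, A)` with respect to the tensor product
coalgebra structure of `H ⊗ H`. -/
def conv2 (α β : H ⊗[k] H →ₗ[k] A) : H ⊗[k] H →ₗ[k] A :=
  LinearMap.mul' k A ∘ₗ TensorProduct.map α β ∘ₗ comul2 k H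

/-- `(h, g) ↦ Σ α(h₍₁₎ ⊗ g₍₁₎) ε(h₍₂₎ g₍₂₎)`. -/
def convCounitR (α : H ⊗[k] H →ₗ[k] A) : H ⊗[k] H →ₗ[k] A :=
  (TensorProduct.rid k A).toLinearMap ∘ₗ
    TensorProduct.map α (counitH k H ∘ₗ LinearMap.mul' k H) ∘ₗ comul2 k H

/-- `(h, g) ↦ Σ ε(h₍₁₎ g₍₁₎) α(h₍₂₎ ⊗ g₍₂₎)`. -/
def convCounitL (α : H ⊗[k] H →ₗ[k] A) : H ⊗[k] H →ₗ[k] A :=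
  (TensorProduct.lid k A).toLinearMap ∘ₗ
    TensorProduct.map (counitH k H ∘ₗ LinearMap.mul' k H) α ∘ₗ comul2 k H

/-- `L(φ)(a ⊗ h) = Σ a φ(h₍₁₎) ⊗ h₍₂₎`. -/
def Lmap (φ : H →ₗ[k] A) : A ⊗[k] H →ₗ[k] A ⊗[k] H :=
  LinearMap.rTensor H (LinearMap.mul' k A ∘ₗ LinearMap.lTensor A φ) ∘ₗ
    (TensorProduct.assoc k A H H).symm.toLinearMap ∘ₗ
      LinearMap.lTensor A (comulH k H)

/-- The idempotent `∇_ρ(a ⊗ h) = Σ a ρ(h₍₁₎ ⊗ 1) ⊗ h₍₂₎`. -/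
def nablaRho (ρ : H ⊗[k] A →ₗ[k] A) : A ⊗[k] H →ₗ[k] A ⊗[k] H :=
  Lmap (rhoAt ρ 1)

/-- The twisting map `χ_ρ(h ⊗ a) = Σ ρ(h₍₁₎ ⊗ a) ⊗ h₍₂₎`. -/
def chiRho (ρ : H ⊗[k] A →ₗ[k] A) : H ⊗[k] A →ₗ[k] A ⊗[k] H :=
  LinearMap.rTensor H ρ ∘ₗ (rightComm k H H A).toLinearMap ∘ₗ
    LinearMap.rTensor A (comulH k H)

/-- The preunit `ν = Σ ρ(1₍₁₎ ⊗ 1_A) ⊗ 1₍₂₎ ∈ A ⊗ H`. -/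
def nu (ρ : H ⊗[k] A →ₗ[k] A) : A ⊗[k] H :=
  chiRho ρ ((1 : H) ⊗ₜ[k] (1 : A))

/-- `F_f(h ⊗ g) = Σ f(h₍₁₎ ⊗ g₍₁₎) ⊗ h₍₂₎ g₍₂₎`. -/
def Fmap (f : H ⊗[k] H →ₗ[k] A) : H ⊗[k] H →ₗ[k] A ⊗[k] H :=
  TensorProduct.map f (LinearMap.mul' k H) ∘ₗ comul2 k H

/-- The twisted module condition:
`Σ f(h₍₁₎⊗g₍₁₎) ρ(h₍₂₎g₍₂₎⊗a) = Σ ρ(h₍₁₎ ⊗ ρ(g₍₁₎⊗a)) f(h₍₂₎⊗g₍₂₎)`. -/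
def IsTwistedModule (ρ : H ⊗[k] A →ₗ[k] A) (f : H ⊗[k] H →ₗ[k] A) : Prop :=
  ∀ a : A,
    conv2 f (rhoAt ρ a ∘ₗ LinearMap.mul' k H) =
      conv2 (ρ ∘ₗ LinearMap.lTensor H (rhoAt ρ a)) f

/-- The cocycle condition:
`Σ f(h₍₁₎⊗g₍₁₎) f(h₍₂₎g₍₂₎⊗l) = Σ ρ(h₍₁₎ ⊗ f(g₍₁₎⊗l₍₁₎)) f(h₍₂₎ ⊗ g₍₂₎l₍₂₎)`. -/
def IsCocycle (ρ : H ⊗[k] A →ₗ[k] A) (f : H ⊗[k] H →ₗ[k] A) : Prop :=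
  LinearMap.mul' k A ∘ₗ
      TensorProduct.map f (f ∘ₗ LinearMap.rTensor H (LinearMap.mul' k H)) ∘ₗ
        (TensorProduct.assoc k (H ⊗[k] H) (H ⊗[k] H) H).toLinearMap ∘ₗ
          LinearMap.rTensor H (comul2 k H) =
    LinearMap.mul' k A ∘ₗ
      TensorProduct.map
        (ρ ∘ₗ LinearMap.lTensor H f ∘ₗ (TensorProduct.assoc k H H H).toLinearMap)
        (f ∘ₗ LinearMap.lTensor H (LinearMap.mul' k H) ∘ₗ
          (TensorProduct.assoc k H H H).toLinearMap) ∘ₗ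
        comul3 k H

/-- The data `(ρ, f)` of a unitary weak crossed product, i.e. conditions
(i)–(v) of the paper: `ρ` is a weak measure, `f` is normalized
(`f(h⊗g) = Σ f(h₍₁₎⊗g₍₁₎) ρ(h₍₂₎g₍₂₎⊗1)`), `f` is a cocycle satisfying the
twisted module condition, and the preunit conditions for
`ν = Σ ρ(1₍₁₎⊗1)⊗1₍₂₎` hold. -/
structure IsCrossedProdData (ρ : H ⊗[k] A →ₗ[k] A) (f : H ⊗[k] H →ₗ[k] A) : Prop where
  measure : IsWeakMeasure ρ
  normal : f = conv2 f (rhoAt ρ 1 ∘ₗ LinearMap.mul' k H)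
  twisted : IsTwistedModule ρ f
  cocycle : IsCocycle ρ f
  preunit_left : ∀ h : H,
    rhoAt ρ 1 h =
      (LinearMap.mul' k A ∘ₗ TensorProduct.map ρ f)
        (TensorProduct.tensorTensorTensorComm k H H A H
          (comulH k H h ⊗ₜ[k] nu ρ))
  preunit_right : ∀ h : H,
    rhoAt ρ 1 h =
      (LinearMap.mul' k A ∘ₗ
        LinearMap.lTensor A (f ∘ₗ (TensorProduct.mk k H H).flip h)) (nu ρ)
  preunit_mid : ∀ a : A,
    Lmap (rhoAt ρ a) (nu ρ) =
      LinearMap.rTensor H (LinearMap.mulLeft k a) (nu ρ)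

/-- `E = A ×_ρ^f H`, the image of the idempotent `∇_ρ`. -/
abbrev CrossE (ρ : H ⊗[k] A →ₗ[k] A) : Submodule k (A ⊗[k] H) :=
  LinearMap.range (nablaRho ρ)

/-- The inclusion `ι : E → A ⊗ H`. -/
def iotaE (ρ : H ⊗[k] A →ₗ[k] A) : CrossE ρ →ₗ[k] A ⊗[k] H :=
  (CrossE ρ).subtype

/-- The projection `p : A ⊗ H → E`, the corestriction of `∇_ρ`. -/
def pE (ρ : H ⊗[k] A →ₗ[k] A) : A ⊗[k] H →ₗ[k] CrossE ρ :=
  (nablaRho ρ).rangeRestrict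

/-- The product `μ♯((a⊗h)⊗(b⊗g)) = Σ a ρ(h₍₁₎⊗b) f(h₍₂₎⊗g₍₁₎) ⊗ h₍₃₎g₍₂₎`. -/
def muSharp (ρ : H ⊗[k] A →ₗ[k] A) (f : H ⊗[k] H →ₗ[k] A) :
    (A ⊗[k] H) ⊗[k] (A ⊗[k] H) →ₗ[k] A ⊗[k] H :=
  LinearMap.rTensor H (LinearMap.mul' k A) ∘ₗ
  (TensorProduct.assoc k A A H).symm.toLinearMap ∘ₗ
  LinearMap.lTensor A
    (LinearMap.rTensor H (LinearMap.mul' k A) ∘ₗ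
     (TensorProduct.assoc k A A H).symm.toLinearMap ∘ₗ
     LinearMap.lTensor A (Fmap f) ∘ₗ
     (TensorProduct.assoc k A H H).toLinearMap ∘ₗ
     LinearMap.rTensor H (chiRho ρ) ∘ₗ
     (TensorProduct.assoc k H A H).symm.toLinearMap) ∘ₗ
  (TensorProduct.assoc k A H (A ⊗[k] H)).toLinearMap

/-- The product of the unitary crossed product `E = A ×_ρ^f H`. -/
def crossMul (ρ : H ⊗[k] A →ₗ[k] A) (f : H ⊗[k] H →ₗ[k] A) (x y : CrossE ρ) :
    CrossE ρ :=
  pE ρ (muSharp ρ f (iotaE ρ x ⊗ₜ[k] iotaE ρ y))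

/-- The product of the crossed product as a linear map. -/
def mulE (ρ : H ⊗[k] A →ₗ[k] A) (f : H ⊗[k] H →ₗ[k] A) :
    CrossE ρ ⊗[k] CrossE ρ →ₗ[k] CrossE ρ :=
  pE ρ ∘ₗ muSharp ρ f ∘ₗ TensorProduct.map (iotaE ρ) (iotaE ρ)

/-- The unit `1_E = p(ν)` of the crossed product. -/
def crossOne (ρ : H ⊗[k] A →ₗ[k] A) : CrossE ρ := pE ρ (nu ρ)

/-- `γ(h) = p(1_A ⊗ h)`. -/
def gammaE (ρ : H ⊗[k] A →ₗ[k] A) : H →ₗ[k] CrossE ρ :=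
  pE ρ ∘ₗ TensorProduct.mk k A H 1

/-- `a ↦ Σ a ν_A ⊗ ν_H`. -/
def jnuAux (ρ : H ⊗[k] A →ₗ[k] A) : A →ₗ[k] A ⊗[k] H :=
  LinearMap.rTensor H (LinearMap.mul' k A) ∘ₗ
    (TensorProduct.assoc k A A H).symm.toLinearMap ∘ₗ
      (TensorProduct.mk k A (A ⊗[k] H)).flip (nu ρ)

/-- `j_ν(a) = p(Σ a ν_A ⊗ ν_H)`. -/
def jnuE (ρ : H ⊗[k] A →ₗ[k] A) : A →ₗ[k] CrossE ρ := pE ρ ∘ₗ jnuAux ρ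

/-- The left action `a ▸ (b ⊗ h) = ab ⊗ h` of `A` on `A ⊗ H`. -/
def aAct (a : A) : A ⊗[k] H →ₗ[k] A ⊗[k] H :=
  LinearMap.rTensor H (LinearMap.mulLeft k a)

/-- The comodule structure `δ_E = (p ⊗ id) ∘ (id ⊗ Δ) ∘ ι` of the crossed
product. -/
def deltaE (ρ : H ⊗[k] A →ₗ[k] A) : CrossE ρ →ₗ[k] CrossE ρ ⊗[k] H :=
  LinearMap.rTensor H (pE ρ) ∘ₗ
    (TensorProduct.assoc k A H H).symm.toLinearMap ∘ₗ
      LinearMap.lTensor A (comulH k H) ∘ₗ iotaE ρ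

/-- The componentwise product `(x⊗h)(y⊗g) = x·y ⊗ hg` on `E ⊗ H`. -/
def mulEH (ρ : H ⊗[k] A →ₗ[k] A) (f : H ⊗[k] H →ₗ[k] A) :
    (CrossE ρ ⊗[k] H) ⊗[k] (CrossE ρ ⊗[k] H) →ₗ[k] CrossE ρ ⊗[k] H :=
  TensorProduct.map (mulE ρ f) (LinearMap.mul' k H) ∘ₗ
    (TensorProduct.tensorTensorTensorComm k (CrossE ρ) H (CrossE ρ) H).toLinearMap

/-- Convolution on `Hom(H, E)` using the crossed product multiplication. -/
def convE (ρ : H ⊗[k] A →ₗ[k] A) (f : H ⊗[k] H →ₗ[k] A)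
    (α β : H →ₗ[k] CrossE ρ) : H →ₗ[k] CrossE ρ :=
  mulE ρ f ∘ₗ TensorProduct.map α β ∘ₗ comulH k H

/-- `γ⁻¹(h) = Σ j_ν(f⁻¹(S(h₍₁₎)₍₁₎ ⊗ h₍₂₎)) · γ(S(h₍₁₎)₍₂₎)`. -/
def gammaInv (ρ : H ⊗[k] A →ₗ[k] A) (f : H ⊗[k] H →ₗ[k] A)
    (S : H →ₗ[k] H) (fi : H ⊗[k] H →ₗ[k] A) : H →ₗ[k] CrossE ρ :=
  mulE ρ f ∘ₗ
    TensorProduct.map (jnuE ρ ∘ₗ fi) (gammaE ρ) ∘ₗ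
      (rightComm k H H H).toLinearMap ∘ₗ
        LinearMap.rTensor H (comulH k H) ∘ₗ
          LinearMap.rTensor H S ∘ₗ comulH k H

/-- `(id ⊗ ε) : A ⊗ H → A`. -/
def epsA : A ⊗[k] H →ₗ[k] A :=
  (TensorProduct.rid k A).toLinearMap ∘ₗ LinearMap.lTensor A (counitH k H)

/-- Right `H`-comodule algebra structure on a unital algebra `B`. -/
structure IsComodAlg {B : Type*} [Ring B] [Algebra k B]
    (δB : B →ₗ[k] B ⊗[k] H) : Prop where
  counit : ∀ b : B,
    (TensorProduct.rid k B) (LinearMap.lTensor B (counitH k H) (δB b)) = b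
  coassoc : (TensorProduct.assoc k B H H).toLinearMap ∘ₗ
      LinearMap.rTensor H δB ∘ₗ δB = LinearMap.lTensor B (comulH k H) ∘ₗ δB
  mul_compat : ∀ x y : B, δB (x * y) = δB x * δB y
  one_compat : LinearMap.lTensor B (piL k H) (δB 1) = δB 1

/-- `(B, j)` is an `H`-cleft extension of `A`, with cleaving map `γ` and
convolution inverse `γi`. -/
structure IsCleft {B : Type*} [Ring B] [Algebra k B]
    (δB : B →ₗ[k] B ⊗[k] H) (j : A →ₗ[k] B) (γ γi : H →ₗ[k] B) : Prop where
  comodAlg : IsComodAlg δB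
  j_mul : ∀ a b : A, j (a * b) = j a * j b
  j_one : j 1 = 1
  j_inj : Function.Injective j
  j_equalizes : ∀ a : A,
    LinearMap.lTensor B (piL k H) (δB (j a)) = δB (j a)
  j_equalizer : ∀ (X : Type*) [AddCommGroup X] [Module k X] (g : X →ₗ[k] B),
    (∀ x : X, LinearMap.lTensor B (piL k H) (δB (g x)) = δB (g x)) →
      ∃! g' : X →ₗ[k] A, j ∘ₗ g' = g
  colinear : ∀ h : H, δB (γ h) = LinearMap.rTensor H γ (comulH k H h)
  total : γ 1 = 1
  inv_left : conv1 γi γ = γ ∘ₗ piR k H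
  inv_right : conv1 γ γi = γ ∘ₗ piL k H
  inv_norm : conv1 (γ ∘ₗ piR k H) γi = γi
  factors : ∃ t : H →ₗ[k] A, γ ∘ₗ piL k H = j ∘ₗ t

/-- `q(x) = Σ x₍₀₎ γ⁻¹(x₍₁₎)`. -/
def qMap {B : Type*} [Ring B] [Algebra k B]
    (δB : B →ₗ[k] B ⊗[k] H) (γi : H →ₗ[k] B) : B →ₗ[k] B :=
  LinearMap.mul' k B ∘ₗ LinearMap.lTensor B γi ∘ₗ δB

/-- `ρ(h ⊗ a) = p(γ(h) j(a))`. -/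
def cleftRho {B : Type*} [Ring B] [Algebra k B]
    (γ : H →ₗ[k] B) (j : A →ₗ[k] B) (p : B →ₗ[k] A) : H ⊗[k] A →ₗ[k] A :=
  p ∘ₗ LinearMap.mul' k B ∘ₗ TensorProduct.map γ j

/-- `f(h ⊗ g) = p(γ(h) γ(g))`. -/
def cleftF {B : Type*} [Ring B] [Algebra k B]
    (γ : H →ₗ[k] B) (p : B →ₗ[k] A) : H ⊗[k] H →ₗ[k] A :=
  p ∘ₗ LinearMap.mul' k B ∘ₗ TensorProduct.map γ γ

/-- `w(a ⊗ h) = j(a) γ(h)`. -/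
def wMap {B : Type*} [Ring B] [Algebra k B]
    (j : A →ₗ[k] B) (γ : H →ₗ[k] B) : A ⊗[k] H →ₗ[k] B :=
  LinearMap.mul' k B ∘ₗ TensorProduct.map j γ

end WeakCrossed

namespace WeakCrossed


section Statement7Aux

set_option synthInstance.maxHeartbeats 1000000
set_option linter.unusedSectionVars false

variable {k : Type*} [Field k]
variable {H : Type*} [Ring H] [Algebra k H] [Coalgebra k H]
variable {B : Type*} [Ring B] [Algebra k B]

/-- `piL` with the element `Δ(1)` replaced by a parameter. -/
private def piLgen (E' : H ⊗[k] H) : H →ₗ[k] H :=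
  (TensorProduct.lid k H).toLinearMap ∘ₗ
    TensorProduct.map (counitH k H) (LinearMap.id : H →ₗ[k] H) ∘ₗ
      LinearMap.mulLeft k E' ∘ₗ (TensorProduct.mk k H H).flip 1

private lemma piL_eq_piLgen : piL k H = piLgen (comulH k H 1) := rfl

private lemma piLgen_apply (E' : H ⊗[k] H) (h : H) :
    piLgen E' h =
      (TensorProduct.lid k H)
        (TensorProduct.map (counitH k H) (LinearMap.id : H →ₗ[k] H)
          (E' * (h ⊗ₜ[k] (1 : H)))) := rfl

private lemma piLgen_tmul (f₁ f₂ h : H) :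
    piLgen (f₁ ⊗ₜ[k] f₂) h = counitH k H (f₁ * h) • f₂ := by
  simp [piLgen_apply, Algebra.TensorProduct.tmul_mul_tmul, mul_one]

/-- `κ((w ⊗ v) ⊗ γ) = ε(v) • w ⊗ γ`. -/
private def kap : (H ⊗[k] H) ⊗[k] H →ₗ[k] H ⊗[k] H :=
  LinearMap.rTensor H
    ((TensorProduct.rid k H).toLinearMap ∘ₗ LinearMap.lTensor H (counitH k H))

private lemma claim1 (E E' D : H ⊗[k] H) :
    LinearMap.lTensor H (piLgen E') (E * D) =
      kap ((((TensorProduct.assoc k H H H).symm ((1 : H) ⊗ₜ[k] E')) *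
          (E ⊗ₜ[k] (1 : H))) * (D ⊗ₜ[k] (1 : H))) := by
  induction E using TensorProduct.induction_on with
  | zero => simp [zero_mul, TensorProduct.zero_tmul]
  | add x y hx hy =>
    simp only [add_mul, mul_add, map_add, TensorProduct.add_tmul,
      TensorProduct.tmul_add, hx, hy]
  | tmul e₁ e₂ =>
    induction D using TensorProduct.induction_on with
    | zero => simp [mul_zero, TensorProduct.zero_tmul]
    | add x y hx hy =>
      simp only [add_mul, mul_add, map_add, TensorProduct.add_tmul,
        TensorProduct.tmul_add, hx, hy]
    | tmul d₁ d₂ =>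
      induction E' using TensorProduct.induction_on with
      | zero =>
        have h0 : piLgen (0 : H ⊗[k] H) = 0 := by
          refine LinearMap.ext fun h => ?_
          simp [piLgen_apply, zero_mul]
        simp [h0, TensorProduct.tmul_zero, zero_mul]
      | add x y hx hy =>
        have hadd : piLgen (x + y) = piLgen x + piLgen y := by
          refine LinearMap.ext fun h => ?_
          simp [piLgen_apply, add_mul]
        simp only [hadd, LinearMap.lTensor_add, LinearMap.add_apply,
          TensorProduct.tmul_add, TensorProduct.add_tmul, map_add, add_mul,
          mul_add, hx, hy]
      | tmul f₁ f₂ =>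
        simp only [Algebra.TensorProduct.tmul_mul_tmul, LinearMap.lTensor_tmul,
          piLgen_tmul, TensorProduct.assoc_symm_tmul, kap, LinearMap.rTensor_tmul,
          LinearMap.coe_comp, Function.comp_apply, LinearEquiv.coe_coe,
          LinearMap.lTensor_tmul, TensorProduct.rid_tmul, one_mul, mul_one,
          TensorProduct.tmul_smul, TensorProduct.smul_tmul', mul_assoc]

private lemma claim2
    (hcm : ∀ x y : H, comulH k H (x * y) = comulH k H x * comulH k H y)
    (E : H ⊗[k] H) (h : H) :
    kap (LinearMap.rTensor H (comulH k H) E * (comulH k H h ⊗ₜ[k] (1 : H))) =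
      E * (h ⊗ₜ[k] (1 : H)) := by
  induction E using TensorProduct.induction_on with
  | zero => simp [zero_mul]
  | add x y hx hy => simp only [map_add, add_mul, hx, hy]
  | tmul e₁ e₂ =>
    rw [LinearMap.rTensor_tmul, Algebra.TensorProduct.tmul_mul_tmul, mul_one,
      ← hcm, Algebra.TensorProduct.tmul_mul_tmul, mul_one]
    rw [kap, LinearMap.rTensor_tmul, LinearMap.comp_apply]
    rw [show LinearMap.lTensor H (counitH k H) (comulH k H (e₁ * h)) =
        (e₁ * h) ⊗ₜ[k] (1 : k) from Coalgebra.lTensor_counit_comul _]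
    simp

/-- The weak-bialgebra identity `Σ h₍₁₎ ⊗ Π^L(h₍₂₎) = Δ(1)(h ⊗ 1)`. -/
private lemma lemB6 (hWB : IsWeakBialgebra k H) (h : H) :
    LinearMap.lTensor H (piL k H) (comulH k H h) =
      comulH k H 1 * (h ⊗ₜ[k] (1 : H)) := by
  have e1 : comulH k H h = comulH k H 1 * comulH k H h := by
    rw [← hWB.comul_mul, one_mul]
  rw [piL_eq_piLgen, e1, claim1, ← hWB.comul_one_right,
    show comul3H k H (1 : H) =
      LinearMap.rTensor H (comulH k H) (comulH k H 1) from rfl,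
    claim2 hWB.comul_mul]

/-- The map `F = assoc ∘ (δ ⊗ id)`. -/
private def Fm (δB : B →ₗ[k] B ⊗[k] H) : B ⊗[k] H →ₗ[k] B ⊗[k] (H ⊗[k] H) :=
  (TensorProduct.assoc k B H H).toLinearMap ∘ₗ LinearMap.rTensor H δB

private lemma Fm_tmul (δB : B →ₗ[k] B ⊗[k] H) (b : B) (h : H) :
    Fm δB (b ⊗ₜ[k] h) = (TensorProduct.assoc k B H H) (δB b ⊗ₜ[k] h) := rfl

private lemma assoc_tmul_mul (X Y : B ⊗[k] H) (h g : H) :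
    (TensorProduct.assoc k B H H) ((X * Y) ⊗ₜ[k] (h * g)) =
      (TensorProduct.assoc k B H H) (X ⊗ₜ[k] h) *
        (TensorProduct.assoc k B H H) (Y ⊗ₜ[k] g) := by
  induction X using TensorProduct.induction_on with
  | zero => simp [zero_mul, TensorProduct.zero_tmul]
  | add x y hx hy =>
    simp only [add_mul, TensorProduct.add_tmul, map_add, hx, hy]
  | tmul b hh =>
    induction Y using TensorProduct.induction_on with
    | zero => simp [mul_zero, TensorProduct.zero_tmul]
    | add x y hx hy =>
      simp only [mul_add, TensorProduct.add_tmul, map_add, hx, hy]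
    | tmul c gg =>
      simp [Algebra.TensorProduct.tmul_mul_tmul, TensorProduct.assoc_tmul]

private lemma Fm_mul (δB : B →ₗ[k] B ⊗[k] H)
    (hmul : ∀ x y : B, δB (x * y) = δB x * δB y) (x y : B ⊗[k] H) :
    Fm δB (x * y) = Fm δB x * Fm δB y := by
  induction x using TensorProduct.induction_on with
  | zero => simp [zero_mul]
  | add a b ha hb => simp only [add_mul, map_add, ha, hb]
  | tmul b h =>
    induction y using TensorProduct.induction_on with
    | zero => simp [mul_zero]
    | add a c ha hc => simp only [mul_add, map_add, ha, hc]
    | tmul c g =>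
      rw [Algebra.TensorProduct.tmul_mul_tmul, Fm_tmul, hmul,
        assoc_tmul_mul, Fm_tmul, Fm_tmul]

private lemma Gm_mul
    (hcm : ∀ x y : H, comulH k H (x * y) = comulH k H x * comulH k H y)
    (x y : B ⊗[k] H) :
    LinearMap.lTensor B (comulH k H) (x * y) =
      LinearMap.lTensor B (comulH k H) x * LinearMap.lTensor B (comulH k H) y := by
  induction x using TensorProduct.induction_on with
  | zero => simp [zero_mul]
  | add a b ha hb => simp only [add_mul, map_add, ha, hb]
  | tmul b h =>
    induction y using TensorProduct.induction_on with
    | zero => simp [mul_zero]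
    | add a c ha hc => simp only [mul_add, map_add, ha, hc]
    | tmul c g =>
      rw [Algebra.TensorProduct.tmul_mul_tmul, LinearMap.lTensor_tmul, hcm,
        LinearMap.lTensor_tmul, LinearMap.lTensor_tmul,
        Algebra.TensorProduct.tmul_mul_tmul]

private lemma assoc_tmul_one (v : B ⊗[k] H) :
    (TensorProduct.assoc k B H H) (v ⊗ₜ[k] (1 : H)) =
      LinearMap.lTensor B ((TensorProduct.mk k H H).flip 1) v := by
  induction v using TensorProduct.induction_on with
  | zero => simp [TensorProduct.zero_tmul]
  | add x y hx hy => simp only [TensorProduct.add_tmul, map_add, hx, hy]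
  | tmul b h => simp [TensorProduct.assoc_tmul]

private lemma lTensor_assoc_tmul (φ : H →ₗ[k] H) (X : B ⊗[k] H) (h : H) :
    LinearMap.lTensor B (LinearMap.lTensor H φ)
        ((TensorProduct.assoc k B H H) (X ⊗ₜ[k] h)) =
      (TensorProduct.assoc k B H H) (X ⊗ₜ[k] φ h) := by
  induction X using TensorProduct.induction_on with
  | zero => simp [TensorProduct.zero_tmul]
  | add x y hx hy => simp only [TensorProduct.add_tmul, map_add, hx, hy]
  | tmul b g => simp [TensorProduct.assoc_tmul]

private lemma Fm_lTensor (δB : B →ₗ[k] B ⊗[k] H) (φ : H →ₗ[k] H) (v : B ⊗[k] H) :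
    Fm δB (LinearMap.lTensor B φ v) =
      LinearMap.lTensor B (LinearMap.lTensor H φ) (Fm δB v) := by
  induction v using TensorProduct.induction_on with
  | zero => simp
  | add x y hx hy => simp only [map_add, hx, hy]
  | tmul b h => rw [LinearMap.lTensor_tmul, Fm_tmul, Fm_tmul, lTensor_assoc_tmul]

private lemma lTensor_mulLeft (E : H ⊗[k] H) (Y : B ⊗[k] (H ⊗[k] H)) :
    LinearMap.lTensor B (LinearMap.mulLeft k E) Y = ((1 : B) ⊗ₜ[k] E) * Y := by
  induction Y using TensorProduct.induction_on with
  | zero => simp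
  | add x y hx hy => simp only [map_add, mul_add, hx, hy]
  | tmul c η =>
    rw [LinearMap.lTensor_tmul, Algebra.TensorProduct.tmul_mul_tmul, one_mul,
      LinearMap.mulLeft_apply]

private lemma muS_iota_mul (S : H →ₗ[k] H) (w : B ⊗[k] H) (Y : B ⊗[k] (H ⊗[k] H)) :
    LinearMap.lTensor B (LinearMap.mul' k H ∘ₗ LinearMap.lTensor H S)
        (LinearMap.lTensor B ((TensorProduct.mk k H H).flip 1) w * Y) =
      w * LinearMap.lTensor B (LinearMap.mul' k H ∘ₗ LinearMap.lTensor H S) Y := by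
  induction w using TensorProduct.induction_on with
  | zero => simp [zero_mul]
  | add x y hx hy => simp only [map_add, add_mul, hx, hy]
  | tmul b h =>
    induction Y using TensorProduct.induction_on with
    | zero => simp [mul_zero]
    | add x y hx hy => simp only [map_add, mul_add, hx, hy]
    | tmul c η =>
      induction η using TensorProduct.induction_on with
      | zero => simp [TensorProduct.tmul_zero, mul_zero]
      | add x y hx hy =>
        simp only [TensorProduct.tmul_add, map_add, mul_add, hx, hy]
      | tmul p q =>
        simp only [LinearMap.lTensor_tmul, LinearMap.flip_apply,
          TensorProduct.mk_apply, Algebra.TensorProduct.tmul_mul_tmul, one_mul,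
          LinearMap.coe_comp, Function.comp_apply, LinearMap.mul'_apply,
          mul_assoc]

private def rM : B ⊗[k] (H ⊗[k] H) →ₗ[k] B ⊗[k] H :=
  LinearMap.rTensor H
      ((TensorProduct.rid k B).toLinearMap ∘ₗ LinearMap.lTensor B (counitH k H)) ∘ₗ
    (TensorProduct.assoc k B H H).symm.toLinearMap

private lemma rM_Fm (δB : B →ₗ[k] B ⊗[k] H)
    (hcounit : ∀ b : B,
      (TensorProduct.rid k B) (LinearMap.lTensor B (counitH k H) (δB b)) = b)
    (v : B ⊗[k] H) : rM (Fm δB v) = v := by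
  induction v using TensorProduct.induction_on with
  | zero => simp
  | add x y hx hy => simp only [map_add, hx, hy]
  | tmul b h =>
    rw [Fm_tmul, rM, LinearMap.comp_apply, LinearEquiv.coe_coe,
      LinearEquiv.symm_apply_apply, LinearMap.rTensor_tmul, LinearMap.comp_apply,
      LinearEquiv.coe_coe, hcounit]

end Statement7Aux

/-- If `H` is a weak Hopf algebra and `B` is a unital algebra
with a counital coassociative multiplicative right `H`-comodule structure,
then `Σ (1_B)₍₀₎ ⊗ Π^L((1_B)₍₁₎) = δ_B(1_B)`; in particular `B` is a right
`H`-comodule algebra. -/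
theorem statement_7 {k : Type*} [Field k]
    {H : Type*} [Ring H] [Algebra k H] [Coalgebra k H]
    {B : Type*} [Ring B] [Algebra k B]
    (hWB : IsWeakBialgebra k H)
    (S : H →ₗ[k] H) (hS : IsWeakHopf k H S)
    (δB : B →ₗ[k] B ⊗[k] H)
    (hcounit : ∀ b : B,
      (TensorProduct.rid k B) (LinearMap.lTensor B (counitH k H) (δB b)) = b)
    (hcoassoc : (TensorProduct.assoc k B H H).toLinearMap ∘ₗ
        LinearMap.rTensor H δB ∘ₗ δB = LinearMap.lTensor B (comulH k H) ∘ₗ δB)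
    (hmul : ∀ x y : B, δB (x * y) = δB x * δB y) :
    LinearMap.lTensor B (piL k H) (δB 1) = δB 1 := by
  classical
  -- Notation: `u = δ(1)`, `P = (id ⊗ Π^L)(u)`; the goal is `P = u`.
  set u : B ⊗[k] H := δB 1 with hu
  set P : B ⊗[k] H := LinearMap.lTensor B (piL k H) u with hP
  -- `F u = G u` where `F = assoc ∘ (δ ⊗ id)` and `G = id ⊗ Δ` (coassociativity).
  have hFG : Fm δB u = LinearMap.lTensor B (comulH k H) u := by
    have := LinearMap.congr_fun hcoassoc 1
    simpa [Fm, LinearMap.comp_apply] using this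
  -- `F(1 ⊗ 1) = ι u` where `ι = id ⊗ (- ⊗ 1)`.
  have hF1 : Fm δB ((1 : B) ⊗ₜ[k] (1 : H)) =
      LinearMap.lTensor B ((TensorProduct.mk k H H).flip 1) u := by
    rw [Fm_tmul, ← hu, assoc_tmul_one]
  -- `1 ⊗ Δ(1) = G(1 ⊗ 1)`.
  have hG1 : LinearMap.lTensor B (comulH k H) ((1 : B) ⊗ₜ[k] (1 : H)) =
      (1 : B) ⊗ₜ[k] comulH k H 1 := by
    rw [LinearMap.lTensor_tmul]
  have honeBH : ((1 : B) ⊗ₜ[k] (1 : H)) = (1 : B ⊗[k] H) :=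
    (Algebra.TensorProduct.one_def).symm
  -- Key computation 1 : `F P = (1 ⊗ Δ(1)) * F(1 ⊗ 1)`.
  have hFP : Fm δB P = ((1 : B) ⊗ₜ[k] comulH k H 1) *
      Fm δB ((1 : B) ⊗ₜ[k] (1 : H)) := by
    rw [hP, Fm_lTensor, hFG]
    have hcomp :
        LinearMap.lTensor B (LinearMap.lTensor H (piL k H))
            (LinearMap.lTensor B (comulH k H) u) =
          LinearMap.lTensor B
            ((LinearMap.lTensor H (piL k H)) ∘ₗ comulH k H) u := by
      rw [LinearMap.lTensor_comp, LinearMap.comp_apply]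
    rw [hcomp]
    have hB6map : (LinearMap.lTensor H (piL k H)) ∘ₗ (comulH k H) =
        LinearMap.mulLeft k (comulH k H 1) ∘ₗ (TensorProduct.mk k H H).flip 1 :=
      LinearMap.ext fun h => by
        simpa [LinearMap.comp_apply] using lemB6 hWB h
    rw [hB6map, LinearMap.lTensor_comp, LinearMap.comp_apply, lTensor_mulLeft, hF1]
  -- Key computation 2 : `u * P = u`.
  have key1 : u * P = u := by
    have h1 : Fm δB (u * P) = Fm δB u := by
      rw [Fm_mul δB hmul, hFP, hFG, ← mul_assoc]
      have h2 : LinearMap.lTensor B (comulH k H) u *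
          ((1 : B) ⊗ₜ[k] comulH k H 1) = LinearMap.lTensor B (comulH k H) u := by
        rw [← hG1, ← Gm_mul hWB.comul_mul, honeBH, mul_one]
      rw [h2, ← hFG, ← Fm_mul δB hmul, honeBH, mul_one]
    have h3 := congrArg (rM (k := k) (H := H) (B := B)) h1
    rwa [rM_Fm δB hcounit, rM_Fm δB hcounit] at h3
  -- Key computation 3 : `u * P = P`.
  have key2 : u * P = P := by
    have hanti : (LinearMap.mul' k H ∘ₗ LinearMap.lTensor H S) ∘ₗ comulH k H =
        piL k H :=
      LinearMap.ext fun h => by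
        simpa [LinearMap.comp_apply] using hS.antipode_left h
    have hPmu : LinearMap.lTensor B (LinearMap.mul' k H ∘ₗ LinearMap.lTensor H S)
        (LinearMap.lTensor B (comulH k H) u) = P := by
      rw [← LinearMap.lTensor_comp_apply, hanti]
    rw [← hPmu, ← hFG, ← muS_iota_mul S u (Fm δB u)]
    congr 1
    rw [← hF1, ← Fm_mul δB hmul, honeBH, one_mul]
  rw [← key2, key1]

end WeakCrossed
end
end

section
/- Let H be a weak Hopf algebra over a field k, A a unital associative k-algebra, and ρ : H⊗A → A a weak measure such that ρ(1_H⊗a) = a and ρ(hg⊗1_A) = ρ(h ⊗ ρ(g⊗1_A)) for all h,g ∈ H, a ∈ A. Then ρ(Π^L(h)⊗a) = ρ(h⊗1_A)·a for all h ∈ H and a ∈ A; in particular A is a left weak H-module algebra via ρ. -/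
/-!
Common framework: weak bialgebras, weak Hopf algebras, weak measures and
unitary weak crossed products, formalized via linear maps over a field `k`.
Sweedler sums are expressed by composites of canonical linear maps.
-/

open TensorProduct

set_option autoImplicit false
set_option maxHeartbeats 1000000

noncomputable section

/-!
Write `u(h) = ρ(h ⊗ 1)`. Since `Δ(Π^L(h)) = Σ 1₍₁₎Π^L(h) ⊗ 1₍₂₎`, the measure property together
with `ρ(hg ⊗ 1) = ρ(h ⊗ u(g))` and `ρ(1 ⊗ a) = a` gives `ρ(Π^L(h) ⊗ a) = u(Π^L(h)) a`, so it
remains to show `u ∘ Π^L = u`. Both sides equal `Σ u(h₍₁₎) u(Π^L(h₍₂₎))`: for `u` this follows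
from the weak bialgebra identity `Σ h₍₁₎ ⊗ Π^L(h₍₂₎) = Σ 1₍₁₎h ⊗ 1₍₂₎`, for `u ∘ Π^L` from
`Π^L(h) = Σ h₍₁₎ S(h₍₂₎)` and coassociativity.
-/

namespace WeakCrossed

open Coalgebra

section

variable {k : Type*} [Field k] {H : Type*} [Ring H] [Algebra k H] [Coalgebra k H]
  {A : Type*} [Ring A] [Algebra k A] {ι κ : Type*}

theorem piL_eq_sum (r : Repr k (1 : H) ι) (h : H) :
    piL k H h = ∑ i ∈ r.index, counitH k H (r.left i * h) • r.right i := by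
  simp [piL, ← r.eq, Finset.sum_mul, Algebra.TensorProduct.tmul_mul_tmul]

theorem IsWeakHopf.sum_mul_antipode {S : H →ₗ[k] H} (hS : IsWeakHopf k H S) {h : H}
    (r : Repr k h ι) : ∑ i ∈ r.index, r.left i * S (r.right i) = piL k H h := by
  simpa [← r.eq] using hS.antipode_left h

theorem IsWeakMeasure.apply_tmul_mul {ρ : H ⊗[k] A →ₗ[k] A} (hρ : IsWeakMeasure ρ) {h : H}
    (r : Repr k h ι) (a b : A) :
    ρ (h ⊗ₜ (a * b)) = ∑ i ∈ r.index, ρ (r.left i ⊗ₜ a) * ρ (r.right i ⊗ₜ b) := by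
  simp [hρ h a b, ← r.eq, TensorProduct.sum_tmul]

namespace IsWeakBialgebra

variable (hWB : IsWeakBialgebra k H)
include hWB

theorem comul_eq_sum (r₁ : Repr k (1 : H) ι) {h : H} (r : Repr k h κ) :
    comulH k H h = ∑ i ∈ r₁.index, ∑ t ∈ r.index,
      (r₁.left i * r.left t) ⊗ₜ (r₁.right i * r.right t) := by
  have h1 := hWB.comul_mul 1 h
  rw [one_mul] at h1
  rw [h1, ← r₁.eq, ← r.eq, Finset.sum_mul_sum]
  simp [Algebra.TensorProduct.tmul_mul_tmul]

theorem sum_comul_tmul (r : Repr k (1 : H) ι) :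
    ∑ i ∈ r.index, comulH k H (r.left i) ⊗ₜ r.right i =
      ∑ i ∈ r.index, ∑ j ∈ r.index, (r.left i ⊗ₜ[k] (r.left j * r.right i)) ⊗ₜ[k] r.right j := by
  simpa only [comul3H, LinearMap.comp_apply, ← r.eq, map_sum, LinearMap.rTensor_tmul,
    TensorProduct.tmul_sum, TensorProduct.sum_tmul, TensorProduct.assoc_symm_tmul,
    Finset.sum_mul, Finset.mul_sum, Algebra.TensorProduct.tmul_mul_tmul, one_mul,
    mul_one] using hWB.comul_one_right

theorem sum_tmul_comul (r : Repr k (1 : H) ι) :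
    ∑ i ∈ r.index, r.left i ⊗ₜ[k] comulH k H (r.right i) =
      ∑ i ∈ r.index, ∑ j ∈ r.index, r.left i ⊗ₜ[k] ((r.left j * r.right i) ⊗ₜ[k] r.right j) := by
  calc ∑ i ∈ r.index, r.left i ⊗ₜ[k] comulH k H (r.right i)
      = LinearMap.lTensor H (comulH k H) (comulH k H 1) := by simp [← r.eq]
    _ = TensorProduct.assoc k H H H (LinearMap.rTensor H (comulH k H) (comulH k H 1)) :=
        (coassoc_apply 1).symm
    _ = TensorProduct.assoc k H H H (∑ i ∈ r.index, comulH k H (r.left i) ⊗ₜ r.right i) := by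
        simp [← r.eq]
    _ = _ := by simp [hWB.sum_comul_tmul r]

theorem comul_piL (r : Repr k (1 : H) ι) (h : H) :
    comulH k H (piL k H h) = ∑ j ∈ r.index, (r.left j * piL k H h) ⊗ₜ[k] r.right j := by
  have hε := congrArg ((TensorProduct.lid k (H ⊗[k] H)).toLinearMap ∘ₗ
    LinearMap.rTensor (H ⊗[k] H) (counitH k H ∘ₗ LinearMap.mulRight k h))
    (hWB.sum_tmul_comul r)
  simp only [map_sum, LinearMap.coe_comp, LinearEquiv.coe_coe, Function.comp_apply,
    LinearMap.rTensor_tmul, LinearMap.mulRight_apply, TensorProduct.lid_tmul] at hε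
  rw [piL_eq_sum r h, map_sum]
  simp only [map_smul]
  rw [hε, Finset.sum_comm]
  simp [Finset.mul_sum, TensorProduct.sum_tmul, TensorProduct.smul_tmul']

theorem sum_tmul_piL (r₁ : Repr k (1 : H) ι) {h : H} (r : Repr k h κ) :
    ∑ t ∈ r.index, r.left t ⊗ₜ[k] piL k H (r.right t) =
      ∑ i ∈ r₁.index, (r₁.left i * h) ⊗ₜ[k] r₁.right i := by
  -- `Ψ ((x ⊗ y) ⊗ z) = Σ x h₍₁₎ ε(y h₍₂₎) ⊗ z` sends `Σ Δ(1₍₁₎) ⊗ 1₍₂₎` to `Σ 1₍₁₎h ⊗ 1₍₂₎`, and the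
  -- other side of the weak unit axiom to `Σ h₍₁₎ ⊗ Π^L(h₍₂₎)`.
  set Ψ := LinearMap.rTensor H ((TensorProduct.rid k H).toLinearMap ∘ₗ
    LinearMap.lTensor H (counitH k H) ∘ₗ LinearMap.mulRight k (comulH k H h))
  have hΨ : ∀ x y : H, Ψ (comulH k H x ⊗ₜ y) = (x * h) ⊗ₜ y := by
    intro x y
    simp [Ψ, ← hWB.comul_mul, lTensor_counit_comul]
  calc ∑ t ∈ r.index, r.left t ⊗ₜ[k] piL k H (r.right t)
      = LinearMap.lTensor H (piL k H) (comulH k H h) := by simp [← r.eq]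
    _ = ∑ i ∈ r₁.index, ∑ t ∈ r.index,
          (r₁.left i * r.left t) ⊗ₜ[k] piL k H (r₁.right i * r.right t) := by
        simp [hWB.comul_eq_sum r₁ r]
    _ = Ψ (∑ i ∈ r₁.index, ∑ j ∈ r₁.index,
          (r₁.left i ⊗ₜ[k] (r₁.left j * r₁.right i)) ⊗ₜ[k] r₁.right j) := by
        simp only [Ψ, piL_eq_sum r₁, ← r.eq, map_sum, TensorProduct.tmul_sum,
          TensorProduct.sum_tmul, TensorProduct.tmul_smul, TensorProduct.smul_tmul',
          LinearMap.rTensor_tmul, LinearMap.lTensor_tmul, LinearMap.coe_comp, LinearEquiv.coe_coe,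
          Function.comp_apply, LinearMap.mulRight_apply, Finset.mul_sum,
          Algebra.TensorProduct.tmul_mul_tmul, mul_assoc, TensorProduct.rid_tmul]
        exact Finset.sum_congr rfl fun i _ => Finset.sum_comm
    _ = ∑ i ∈ r₁.index, (r₁.left i * h) ⊗ₜ[k] r₁.right i := by
        simp [← hWB.sum_comul_tmul, hΨ]

end IsWeakBialgebra

section ModuleAlgebra

variable {ρ : H ⊗[k] A →ₗ[k] A} (hρ : IsWeakMeasure ρ)
  (hcomp : ∀ h g : H, ρ ((h * g) ⊗ₜ[k] (1 : A)) = ρ (h ⊗ₜ[k] ρ (g ⊗ₜ[k] (1 : A))))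
include hρ hcomp

theorem rho_mul_tmul_one_eq_sum {x : H} (r : Repr k x ι) (g : H) :
    ρ ((x * g) ⊗ₜ[k] 1) =
      ∑ s ∈ r.index, ρ (r.left s ⊗ₜ[k] 1) * ρ ((r.right s * g) ⊗ₜ[k] 1) := by
  rw [hcomp, ← one_mul (ρ (g ⊗ₜ[k] 1)), hρ.apply_tmul_mul r]
  simp_rw [hcomp]

theorem rho_piL_tmul_one_eq_sum {S : H →ₗ[k] H} (hS : IsWeakHopf k H S) {h : H}
    (r : Repr k h ι) :
    ρ (piL k H h ⊗ₜ[k] 1) =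
      ∑ t ∈ r.index, ρ (r.left t ⊗ₜ[k] 1) * ρ (piL k H (r.right t) ⊗ₜ[k] 1) := by
  have coassoc := congrArg (LinearMap.mul' k A ∘ₗ TensorProduct.map (rhoAt ρ 1)
      (rhoAt ρ 1 ∘ₗ LinearMap.mul' k H ∘ₗ LinearMap.lTensor H S))
    (sum_tmul_tmul_eq r (fun t => ℛ k (r.left t)) (fun t => ℛ k (r.right t)))
  simp only [map_sum, LinearMap.coe_comp, Function.comp_apply, TensorProduct.map_tmul,
    LinearMap.lTensor_tmul, LinearMap.mul'_apply, rhoAt, LinearMap.flip_apply,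
    TensorProduct.mk_apply] at coassoc
  calc ρ (piL k H h ⊗ₜ[k] 1)
      = ∑ t ∈ r.index, ρ ((r.left t * S (r.right t)) ⊗ₜ[k] 1) := by
        rw [← hS.sum_mul_antipode r, TensorProduct.sum_tmul, map_sum]
    _ = ∑ t ∈ r.index, ∑ s ∈ (ℛ k (r.left t)).index, ρ ((ℛ k (r.left t)).left s ⊗ₜ[k] 1) *
          ρ (((ℛ k (r.left t)).right s * S (r.right t)) ⊗ₜ[k] 1) :=
        Finset.sum_congr rfl fun t _ => rho_mul_tmul_one_eq_sum hρ hcomp _ _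
    _ = _ := by
        rw [coassoc]
        simp_rw [← Finset.mul_sum, ← map_sum, ← TensorProduct.sum_tmul,
          hS.sum_mul_antipode]

variable (hone : ∀ a : A, ρ ((1 : H) ⊗ₜ[k] a) = a)
include hone

theorem sum_rho_mul_tmul_one_mul (r : Repr k (1 : H) ι) (g : H) (a : A) :
    ∑ i ∈ r.index, ρ ((r.left i * g) ⊗ₜ[k] 1) * ρ (r.right i ⊗ₜ[k] a) = ρ (g ⊗ₜ[k] 1) * a := by
  simp_rw [hcomp]
  rw [← hρ.apply_tmul_mul r, hone]

theorem rho_piL_tmul (hWB : IsWeakBialgebra k H) (h : H) (a : A) :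
    ρ (piL k H h ⊗ₜ[k] a) = ρ (piL k H h ⊗ₜ[k] 1) * a := by
  let r := ℛ k (1 : H)
  let rPiL : Repr k (piL k H h) _ :=
    ⟨r.index, fun j => r.left j * piL k H h, r.right, (hWB.comul_piL r h).symm⟩
  rw [← one_mul a, hρ.apply_tmul_mul rPiL, one_mul]
  exact sum_rho_mul_tmul_one_mul hρ hcomp hone r _ a

theorem sum_rho_mul_rho_piL (hWB : IsWeakBialgebra k H) {h : H} (r : Repr k h ι) :
    ∑ t ∈ r.index, ρ (r.left t ⊗ₜ[k] 1) * ρ (piL k H (r.right t) ⊗ₜ[k] 1) = ρ (h ⊗ₜ[k] 1) := by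
  have hunit := congrArg (LinearMap.mul' k A ∘ₗ TensorProduct.map (rhoAt ρ 1) (rhoAt ρ 1))
    (hWB.sum_tmul_piL (ℛ k 1) r)
  simp only [map_sum, LinearMap.coe_comp, Function.comp_apply, TensorProduct.map_tmul,
    LinearMap.mul'_apply, rhoAt, LinearMap.flip_apply, TensorProduct.mk_apply] at hunit
  rw [hunit, sum_rho_mul_tmul_one_mul hρ hcomp hone, mul_one]

theorem rho_piL_tmul_one (hWB : IsWeakBialgebra k H) {S : H →ₗ[k] H} (hS : IsWeakHopf k H S)
    (h : H) : ρ (piL k H h ⊗ₜ[k] 1) = ρ (h ⊗ₜ[k] 1) := by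
  rw [rho_piL_tmul_one_eq_sum hρ hcomp hS (ℛ k h), sum_rho_mul_rho_piL hρ hcomp hone hWB]

end ModuleAlgebra

end

/-- If `H` is a weak Hopf algebra and `ρ` is a weak measure
with `ρ(1⊗a) = a` and `ρ(hg⊗1) = ρ(h⊗ρ(g⊗1))`, then
`ρ(Π^L(h)⊗a) = ρ(h⊗1) a`; in particular `A` is a left weak `H`-module
algebra via `ρ`. -/
theorem statement_8 {k : Type*} [Field k]
    {H : Type*} [Ring H] [Algebra k H] [Coalgebra k H]
    {A : Type*} [Ring A] [Algebra k A]
    (hWB : IsWeakBialgebra k H)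
    (S : H →ₗ[k] H) (hS : IsWeakHopf k H S)
    (ρ : H ⊗[k] A →ₗ[k] A) (hρ : IsWeakMeasure ρ)
    (hone : ∀ a : A, ρ ((1 : H) ⊗ₜ[k] a) = a)
    (hcomp : ∀ h g : H,
      ρ ((h * g) ⊗ₜ[k] (1 : A)) = ρ (h ⊗ₜ[k] ρ (g ⊗ₜ[k] (1 : A)))) :
    ∀ (h : H) (a : A),
      ρ (piL k H h ⊗ₜ[k] a) = ρ (h ⊗ₜ[k] (1 : A)) * a := by
  intro h a
  rw [rho_piL_tmul hρ hcomp hone hWB, rho_piL_tmul_one hρ hcomp hone hWB hS]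

end WeakCrossed
end
end

section
/- With the notation of the context, and assuming in addition that A is a left weak H-module algebra via ρ, the pair (A, j_ν) is the equalizer of δ_E and (id_E⊗Π^L)∘δ_E: the map j_ν is injective, δ_E∘j_ν = (id_E⊗Π^L)∘δ_E∘j_ν, and for every k-vector space X and every k-linear map g : X → E with δ_E∘g = (id_E⊗Π^L)∘δ_E∘g there exists a unique k-linear map g' : X → A with j_ν∘g' = g. -/
/-!
Common framework: weak bialgebras, weak Hopf algebras, weak measures and
unitary weak crossed products, formalized via linear maps over a field `k`.
Sweedler sums are expressed by composites of canonical linear maps.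
-/

open TensorProduct

set_option autoImplicit false
set_option maxHeartbeats 1000000

noncomputable section

/-!
With `ε_A = id_A ⊗ ε`, the map `ε_A ∘ ι` retracts `j_ν`, since `ε_A(ι(j_ν(a))) = a ρ(1 ⊗ 1_A) = a`;
this gives injectivity and uniqueness of factorizations.

`δ_E ∘ j_ν` lands in the `Π^L`-invariants because `Δ²(1)` is `Π^L`-invariant in its last
factor. The heart of this is `Σ 1₍₁₎ ⊗ Π^L(1₍₂₎) = Δ(1)`, obtained by applying `id ⊗ ε ⊗ id` to
the weak unit axiom `Δ²(1) = (1 ⊗ Δ(1))(Δ(1) ⊗ 1)`.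

Conversely, if `δ_E(e)` is `Π^L`-invariant, applying `ε_A ⊗ id` shows that `y = ι(e)` satisfies
`(id ⊗ Π^L)(y) = y`. Since `Δ(Π^L(g)) = Σ Π^L(g) 1₍₁₎ ⊗ 1₍₂₎` and
`ρ(Π^L(g) h ⊗ 1_A) = ρ(g ⊗ 1_A) ρ(h ⊗ 1_A)`, one has `∇_ρ ∘ (id ⊗ Π^L) ∘ ∇_ρ = j ∘ ε_A ∘ ∇_ρ`
with `j(a) = Σ a ν_A ⊗ ν_H`, and hence `e = j_ν(ε_A(ι(e)))`.
-/

namespace WeakCrossed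

section

open LinearMap

section TensorAlgebra

variable {R : Type*} [CommSemiring R]

lemma lTensor_rTensor_comm {M N P Q : Type*} [AddCommMonoid M] [Module R M] [AddCommMonoid N]
    [Module R N] [AddCommMonoid P] [Module R P] [AddCommMonoid Q] [Module R Q]
    (f : P →ₗ[R] Q) (g : M →ₗ[R] N) (x : M ⊗[R] P) :
    lTensor N f (rTensor P g x) = rTensor Q g (lTensor M f x) := by
  rw [← comp_apply, ← comp_apply, lTensor_comp_rTensor, rTensor_comp_lTensor]

lemma mul'_map_mulLeft_comp {M N B : Type*} [AddCommMonoid M] [Module R M] [AddCommMonoid N]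
    [Module R N] [Semiring B] [Algebra R B] (b : B) (φ : M →ₗ[R] B) (ψ : N →ₗ[R] B)
    (x : M ⊗[R] N) :
    mul' R B (map (mulLeft R b ∘ₗ φ) ψ x) = b * mul' R B (map φ ψ x) := by
  induction x using TensorProduct.induction_on <;> simp_all [mul_assoc, mul_add]

end TensorAlgebra

variable {k : Type*} [Field k] {H : Type*} [Ring H] [Algebra k H] [Coalgebra k H]

section WeakBialgebra

lemma piL_apply (g : H) :
    piL k H g = TensorProduct.lid k H (rTensor H (counitH k H ∘ₗ mulRight k g) (comulH k H 1)) := by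
  change TensorProduct.lid k H (rTensor H (counitH k H) (comulH k H 1 * (g ⊗ₜ[k] 1))) = _
  induction comulH k H 1 using TensorProduct.induction_on <;> simp_all [add_mul]

lemma rTensor_counit_comul3H (x : H) :
    rTensor H (TensorProduct.rid k H ∘ₗ lTensor H (counitH k H)) (comul3H k H x) =
      comulH k H x := by
  rw [comul3H, comp_apply, ← rTensor_comp_apply, comp_assoc, Coalgebra.lTensor_counit_comp_comul]
  have : (TensorProduct.rid k H).toLinearMap ∘ₗ (TensorProduct.mk k H k).flip 1 = LinearMap.id := by
    ext; simp
  rw [this, rTensor_id_apply]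

lemma lTensor_piL_apply (z : H ⊗[k] H) :
    lTensor H (piL k H) z = rTensor H (TensorProduct.rid k H ∘ₗ lTensor H (counitH k H))
      ((TensorProduct.assoc k H H H).symm ((1 : H) ⊗ₜ[k] comulH k H 1) * (z ⊗ₜ[k] 1)) := by
  induction z using TensorProduct.induction_on with
  | zero => simp
  | add x y hx hy => simp [add_tmul, mul_add, hx, hy]
  | tmul e f =>
    rw [lTensor_tmul, piL_apply]
    induction comulH k H 1 using TensorProduct.induction_on with
    | zero => simp
    | add x y hx hy => simp [tmul_add, add_mul, hx, hy]
    | tmul a b => simp [TensorProduct.smul_tmul]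

lemma lTensor_piL_comul_one (hWB : IsWeakBialgebra k H) :
    lTensor H (piL k H) (comulH k H 1) = comulH k H 1 := by
  rw [lTensor_piL_apply, ← hWB.comul_one_right, rTensor_counit_comul3H]

lemma lTensor_piL_comul3H_one (hWB : IsWeakBialgebra k H) :
    lTensor (H ⊗[k] H) (piL k H) (comul3H k H 1) = comul3H k H 1 := by
  have hmul : ∀ y : (H ⊗[k] H) ⊗[k] H,
      lTensor (H ⊗[k] H) (piL k H) ((comulH k H 1 ⊗ₜ[k] 1) * y) =
        (comulH k H 1 ⊗ₜ[k] 1) * lTensor (H ⊗[k] H) (piL k H) y := by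
    intro y
    induction y using TensorProduct.induction_on <;> simp_all [mul_add]
  rw [hWB.comul_one_left, hmul, lTensor_tensor]
  simp [lTensor_piL_comul_one hWB]

lemma comul_piL (hWB : IsWeakBialgebra k H) (g : H) :
    comulH k H (piL k H g) = (piL k H g ⊗ₜ[k] 1) * comulH k H 1 := by
  set φ : H →ₗ[k] k := counitH k H ∘ₗ mulRight k g
  have hcomul : ∀ c : H ⊗[k] H, comulH k H (TensorProduct.lid k H (rTensor H φ c)) =
      TensorProduct.lid k (H ⊗[k] H) (rTensor (H ⊗[k] H) φ (lTensor H (comulH k H) c)) := by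
    intro c
    induction c using TensorProduct.induction_on <;> simp_all
  have hslice : ∀ c d : H ⊗[k] H,
      TensorProduct.lid k (H ⊗[k] H) (rTensor (H ⊗[k] H) φ (TensorProduct.assoc k H H H
        ((c ⊗ₜ[k] 1) * (TensorProduct.assoc k H H H).symm (1 ⊗ₜ[k] d)))) =
      (TensorProduct.lid k H (rTensor H φ c) ⊗ₜ[k] 1) * d := by
    intro c d
    induction c using TensorProduct.induction_on with
    | zero => simp
    | add x y hx hy => simp_all [add_tmul, add_mul]
    | tmul a b =>
      induction d using TensorProduct.induction_on with
      | zero => simp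
      | add x y hx hy => simp_all [tmul_add, mul_add]
      | tmul u v => simp [φ, TensorProduct.smul_tmul']
  rw [piL_apply, hcomul, ← Coalgebra.coassoc_apply]
  rw [show rTensor H (comulH k H) (comulH k H 1) = comul3H k H 1 from rfl, hWB.comul_one_left,
    hslice]

end WeakBialgebra

variable {A : Type*} [Ring A] [Algebra k A]

section MeasureAndModuleAlgebra

lemma epsA_rTensor_comul (χ : H →ₗ[k] A) (h : H) :
    epsA (rTensor H χ (comulH k H h)) = χ h := by
  rw [epsA, comp_apply, ← comp_apply (lTensor A _), lTensor_comp_rTensor, ← rTensor_comp_lTensor,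
    comp_apply, Coalgebra.lTensor_counit_comul]
  simp

lemma Lmap_tmul (φ : H →ₗ[k] A) (a : A) (h : H) :
    Lmap φ (a ⊗ₜ[k] h) = rTensor H (mulLeft k a ∘ₗ φ) (comulH k H h) := by
  simp only [Lmap, comp_apply, lTensor_tmul, LinearEquiv.coe_coe]
  induction comulH k H h using TensorProduct.induction_on <;> simp_all [tmul_add]

lemma Lmap_comp_Lmap (φ ψ : H →ₗ[k] A) : Lmap φ ∘ₗ Lmap ψ = Lmap (conv1 ψ φ) := by
  refine TensorProduct.ext' fun a h => ?_
  have hL : ∀ y : H ⊗[k] H, Lmap φ (rTensor H (mulLeft k a ∘ₗ ψ) y) =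
      rTensor H (mul' k A ∘ₗ map (mulLeft k a ∘ₗ ψ) φ)
        ((TensorProduct.assoc k H H H).symm (lTensor H (comulH k H) y)) := by
    intro y
    induction y using TensorProduct.induction_on with
    | zero => simp
    | add x y hx hy => simp_all
    | tmul u v =>
      rw [rTensor_tmul, lTensor_tmul, comp_apply, Lmap_tmul]
      induction comulH k H v using TensorProduct.induction_on <;> simp_all [tmul_add, mul_assoc]
  rw [comp_apply, Lmap_tmul, hL, Coalgebra.coassoc_symm_apply, ← rTensor_comp_apply, Lmap_tmul]
  congr 1
  ext x
  simp [conv1, mul'_map_mulLeft_comp]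

lemma conv1_rhoAt_one {ρ : H ⊗[k] A →ₗ[k] A} (hM : IsWeakMeasure ρ) :
    conv1 (rhoAt ρ 1) (rhoAt ρ 1) = rhoAt ρ 1 := by
  ext h
  have := hM h 1 1
  rw [mul_one] at this
  simp only [conv1, rhoAt, comp_apply, flip_apply, TensorProduct.mk_apply, this]
  induction comulH k H h using TensorProduct.induction_on with
  | zero => simp
  | add x y hx hy => simp only [map_add, TensorProduct.add_tmul, hx, hy]
  | tmul u v => simp

lemma nablaRho_tmul (ρ : H ⊗[k] A →ₗ[k] A) (a : A) (h : H) :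
    nablaRho ρ (a ⊗ₜ[k] h) = rTensor H (mulLeft k a ∘ₗ rhoAt ρ 1) (comulH k H h) :=
  Lmap_tmul _ a h

lemma nablaRho_idem {ρ : H ⊗[k] A →ₗ[k] A} (hM : IsWeakMeasure ρ) :
    nablaRho ρ ∘ₗ nablaRho ρ = nablaRho ρ := by
  rw [nablaRho, Lmap_comp_Lmap, conv1_rhoAt_one hM]

lemma jnuAux_eq_nablaRho (ρ : H ⊗[k] A →ₗ[k] A) (a : A) :
    jnuAux ρ a = nablaRho ρ (a ⊗ₜ[k] 1) := by
  simp only [jnuAux, nu, chiRho, rightComm, nablaRho_tmul, comp_apply, flip_apply,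
    TensorProduct.mk_apply, LinearEquiv.coe_coe, rTensor_tmul]
  induction comulH k H 1 using TensorProduct.induction_on <;>
    simp_all [TensorProduct.tmul_add, TensorProduct.add_tmul, rhoAt]

lemma epsA_jnuAux {ρ : H ⊗[k] A →ₗ[k] A} (hone : ∀ a : A, ρ ((1 : H) ⊗ₜ[k] a) = a) (a : A) :
    epsA (jnuAux ρ a) = a := by
  rw [jnuAux_eq_nablaRho, nablaRho_tmul, epsA_rTensor_comul]
  simp [rhoAt, hone]

lemma nablaRho_tmul_piL (hWB : IsWeakBialgebra k H) {ρ : H ⊗[k] A →ₗ[k] A}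
    (hcomp : ∀ h g : H, ρ ((h * g) ⊗ₜ[k] (1 : A)) = ρ (h ⊗ₜ[k] ρ (g ⊗ₜ[k] (1 : A))))
    (hpiL : ∀ (h : H) (a : A), ρ (piL k H h ⊗ₜ[k] a) = ρ (h ⊗ₜ[k] (1 : A)) * a) (b : A) (g : H) :
    nablaRho ρ (b ⊗ₜ[k] piL k H g) = jnuAux ρ (b * ρ (g ⊗ₜ[k] 1)) := by
  rw [nablaRho_tmul, comul_piL hWB, jnuAux_eq_nablaRho, nablaRho_tmul]
  induction comulH k H 1 using TensorProduct.induction_on with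
  | zero => simp
  | add x y hx hy => simp only [mul_add, map_add, hx, hy]
  | tmul u v => simp [rhoAt, hcomp, hpiL]

lemma jnuAux_epsA_nablaRho (hWB : IsWeakBialgebra k H) {ρ : H ⊗[k] A →ₗ[k] A}
    (hM : IsWeakMeasure ρ)
    (hcomp : ∀ h g : H, ρ ((h * g) ⊗ₜ[k] (1 : A)) = ρ (h ⊗ₜ[k] ρ (g ⊗ₜ[k] (1 : A))))
    (hpiL : ∀ (h : H) (a : A), ρ (piL k H h ⊗ₜ[k] a) = ρ (h ⊗ₜ[k] (1 : A)) * a)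
    (y : A ⊗[k] H) :
    jnuAux ρ (epsA (nablaRho ρ y)) = nablaRho ρ (lTensor A (piL k H) (nablaRho ρ y)) := by
  induction y using TensorProduct.induction_on with
  | zero => simp
  | add x y hx hy => simp only [map_add, hx, hy]
  | tmul a h =>
    have hslice : ∀ z : H ⊗[k] H,
        nablaRho ρ (lTensor A (piL k H) (rTensor H (mulLeft k a ∘ₗ rhoAt ρ 1) z)) =
          jnuAux ρ (mul' k A (map (mulLeft k a ∘ₗ rhoAt ρ 1) (rhoAt ρ 1) z)) := by
      intro z
      induction z using TensorProduct.induction_on with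
      | zero => simp
      | add x y hx hy => simp only [map_add, hx, hy]
      | tmul u v => simp [nablaRho_tmul_piL hWB hcomp hpiL, rhoAt]
    rw [nablaRho_tmul, epsA_rTensor_comul, hslice, mul'_map_mulLeft_comp]
    exact congrArg (fun b => jnuAux ρ (a * b)) (LinearMap.congr_fun (conv1_rhoAt_one hM) h).symm

end MeasureAndModuleAlgebra

def coactA : A ⊗[k] H →ₗ[k] (A ⊗[k] H) ⊗[k] H :=
  (TensorProduct.assoc k A H H).symm.toLinearMap ∘ₗ lTensor A (comulH k H)

lemma coactA_rTensor_comul (χ : H →ₗ[k] A) (h : H) :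
    coactA (rTensor H χ (comulH k H h)) = rTensor H (rTensor H χ) (comul3H k H h) := by
  have hnat : ∀ y : H ⊗[k] H, coactA (rTensor H χ y) =
      rTensor H (rTensor H χ) ((TensorProduct.assoc k H H H).symm (lTensor H (comulH k H) y)) := by
    intro y
    induction y using TensorProduct.induction_on with
    | zero => simp
    | add x y hx hy => simp only [map_add, hx, hy]
    | tmul u v =>
      simp only [coactA, comp_apply, rTensor_tmul, lTensor_tmul, LinearEquiv.coe_coe]
      induction comulH k H v using TensorProduct.induction_on <;>
        simp_all [TensorProduct.tmul_add]
  rw [hnat, Coalgebra.coassoc_symm_apply]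
  rfl

lemma rTensor_epsA_nablaRho_coactA (ρ : H ⊗[k] A →ₗ[k] A) (y : A ⊗[k] H) :
    rTensor H (epsA ∘ₗ nablaRho ρ) (coactA y) = nablaRho ρ y := by
  induction y using TensorProduct.induction_on with
  | zero => simp
  | add x y hx hy => simp only [map_add, hx, hy]
  | tmul a h =>
    simp only [coactA, comp_apply, lTensor_tmul, LinearEquiv.coe_coe, nablaRho_tmul]
    induction comulH k H h using TensorProduct.induction_on with
    | zero => simp
    | add x y hx hy => simp only [TensorProduct.tmul_add, map_add, hx, hy]
    | tmul u v => simp [nablaRho_tmul, epsA_rTensor_comul, rhoAt]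

section CrossedProduct

variable {ρ : H ⊗[k] A →ₗ[k] A}

lemma deltaE_eq (ρ : H ⊗[k] A →ₗ[k] A) :
    deltaE ρ = rTensor H (pE ρ) ∘ₗ coactA ∘ₗ iotaE ρ := rfl

lemma nablaRho_iotaE (hM : IsWeakMeasure ρ) (e : CrossE ρ) :
    nablaRho ρ (iotaE ρ e) = iotaE ρ e := by
  obtain ⟨_, y, rfl⟩ := e
  exact LinearMap.congr_fun (nablaRho_idem hM) y

lemma iotaE_jnuE (hM : IsWeakMeasure ρ) (a : A) : iotaE ρ (jnuE ρ a) = jnuAux ρ a := by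
  change nablaRho ρ (jnuAux ρ a) = jnuAux ρ a
  rw [jnuAux_eq_nablaRho]
  exact LinearMap.congr_fun (nablaRho_idem hM) _

lemma jnuE_injective (hM : IsWeakMeasure ρ) (hone : ∀ a : A, ρ ((1 : H) ⊗ₜ[k] a) = a) :
    Function.Injective (jnuE ρ) :=
  Function.LeftInverse.injective (g := epsA ∘ iotaE ρ) fun a => by
    simp [iotaE_jnuE hM, epsA_jnuAux hone]

lemma lTensor_piL_deltaE_jnuE (hWB : IsWeakBialgebra k H) (hM : IsWeakMeasure ρ) (a : A) :
    lTensor (CrossE ρ) (piL k H) (deltaE ρ (jnuE ρ a)) = deltaE ρ (jnuE ρ a) := by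
  rw [deltaE_eq, comp_apply, comp_apply, iotaE_jnuE hM, jnuAux_eq_nablaRho, nablaRho_tmul,
    coactA_rTensor_comul, lTensor_rTensor_comm, lTensor_rTensor_comm,
    lTensor_piL_comul3H_one hWB]

lemma rTensor_epsA_iotaE_deltaE (hM : IsWeakMeasure ρ) (e : CrossE ρ) :
    rTensor H (epsA ∘ₗ iotaE ρ) (deltaE ρ e) = iotaE ρ e := by
  rw [deltaE_eq, comp_apply, comp_apply, ← rTensor_comp_apply, comp_assoc,
    show iotaE ρ ∘ₗ pE ρ = nablaRho ρ from rfl, rTensor_epsA_nablaRho_coactA, nablaRho_iotaE hM]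

lemma jnuE_epsA_iotaE_of_lTensor_piL (hWB : IsWeakBialgebra k H) (hM : IsWeakMeasure ρ)
    (hcomp : ∀ h g : H, ρ ((h * g) ⊗ₜ[k] (1 : A)) = ρ (h ⊗ₜ[k] ρ (g ⊗ₜ[k] (1 : A))))
    (hpiL : ∀ (h : H) (a : A), ρ (piL k H h ⊗ₜ[k] a) = ρ (h ⊗ₜ[k] (1 : A)) * a)
    {e : CrossE ρ} (he : lTensor (CrossE ρ) (piL k H) (deltaE ρ e) = deltaE ρ e) :
    jnuE ρ (epsA (iotaE ρ e)) = e := by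
  have hinv : lTensor A (piL k H) (iotaE ρ e) = iotaE ρ e := by
    have := congrArg (rTensor H (epsA ∘ₗ iotaE ρ)) he
    rwa [← lTensor_rTensor_comm, rTensor_epsA_iotaE_deltaE hM] at this
  apply Subtype.ext
  calc iotaE ρ (jnuE ρ (epsA (iotaE ρ e)))
      = jnuAux ρ (epsA (nablaRho ρ (iotaE ρ e))) := by rw [iotaE_jnuE hM, nablaRho_iotaE hM]
    _ = nablaRho ρ (lTensor A (piL k H) (nablaRho ρ (iotaE ρ e))) :=
      jnuAux_epsA_nablaRho hWB hM hcomp hpiL _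
    _ = iotaE ρ e := by rw [nablaRho_iotaE hM, hinv, nablaRho_iotaE hM]

end CrossedProduct

end

/-- If `A` is a left weak `H`-module algebra, then
`(A, j_ν)` is the equalizer of `δ_E` and `(id_E ⊗ Π^L) ∘ δ_E`. -/
theorem statement_13 {k : Type*} [Field k]
    {H : Type*} [Ring H] [Algebra k H] [Coalgebra k H]
    {A : Type*} [Ring A] [Algebra k A]
    (hWB : IsWeakBialgebra k H)
    (ρ : H ⊗[k] A →ₗ[k] A) (f : H ⊗[k] H →ₗ[k] A)
    (hD : IsCrossedProdData ρ f)
    (hone : ∀ a : A, ρ ((1 : H) ⊗ₜ[k] a) = a)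
    (hcomp : ∀ h g : H,
      ρ ((h * g) ⊗ₜ[k] (1 : A)) = ρ (h ⊗ₜ[k] ρ (g ⊗ₜ[k] (1 : A))))
    (hpiL : ∀ (h : H) (a : A),
      ρ (piL k H h ⊗ₜ[k] a) = ρ (h ⊗ₜ[k] (1 : A)) * a) :
    Function.Injective (jnuE ρ) ∧
    (∀ a : A,
      LinearMap.lTensor (CrossE ρ) (piL k H) (deltaE ρ (jnuE ρ a)) =
        deltaE ρ (jnuE ρ a)) ∧
    (∀ (X : Type*) [AddCommGroup X] [Module k X] (g : X →ₗ[k] CrossE ρ),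
      (∀ x : X,
        LinearMap.lTensor (CrossE ρ) (piL k H) (deltaE ρ (g x)) =
          deltaE ρ (g x)) →
        ∃! g' : X →ₗ[k] A, jnuE ρ ∘ₗ g' = g) := by
  have hM := hD.measure
  have hinj := jnuE_injective hM hone
  refine ⟨hinj, lTensor_piL_deltaE_jnuE hWB hM, fun X _ _ g hg => ?_⟩
  have hsection : jnuE ρ ∘ₗ (epsA ∘ₗ iotaE ρ ∘ₗ g) = g :=
    LinearMap.ext fun x => jnuE_epsA_iotaE_of_lTensor_piL hWB hM hcomp hpiL (hg x)
  refine ⟨epsA ∘ₗ iotaE ρ ∘ₗ g, hsection, fun g' hg' => ?_⟩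
  exact LinearMap.ext fun x => hinj (LinearMap.congr_fun (hg'.trans hsection.symm) x)

end WeakCrossed
end
end
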